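/- Let ρ(ν) = 2(1 + 2√ν)/(9(1 + √ν)²(1 + ν)²) for 0 < ν ≤ 4 and ρ(ν) = (3ν² − 8)/(36(ν²−1)²) for ν > 4, and F(ν) = −log ρ(ν). Then F is twice continuously differentiable at ν = 4: the one-sided first and second derivatives of F at 4 agree. -/

import Mathlib

open Real

noncomputable def Fl : ℝ → ℝ := fun ν =>
  -Real.log (2 * (1 + 2 * Real.sqrt ν) / (9 * (1 + Real.sqrt ν) ^ 2 * (1 + ν) ^ 2))

noncomputable def Fr : ℝ → ℝ := fun ν =>
  -Real.log ((3 * ν ^ 2 - 8) / (36 * (ν ^ 2 - 1) ^ 2))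

noncomputable def Hl : ℝ → ℝ := fun x =>
  -(Real.sqrt x * (1 + 2 * Real.sqrt x))⁻¹ + (Real.sqrt x * (1 + Real.sqrt x))⁻¹
    + 2 * (1 + x)⁻¹

noncomputable def Hr : ℝ → ℝ := fun x =>
  -(6 * x) * (3 * x ^ 2 - 8)⁻¹ + 4 * x * (x ^ 2 - 1)⁻¹

lemma sqrt_four : Real.sqrt 4 = 2 := by
  rw [show (4:ℝ) = 2 ^ 2 by norm_num, Real.sqrt_sq (by norm_num : (0:ℝ) ≤ 2)]

lemma hFl (x : ℝ) (hx : 1 < x) : HasDerivAt Fl (Hl x) x := by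
  have hx0 : 0 < x := by linarith
  have hs0 : (0:ℝ) < Real.sqrt x := Real.sqrt_pos.2 hx0
  have hsne : Real.sqrt x ≠ 0 := ne_of_gt hs0
  have h1 : (1 : ℝ) + 2 * Real.sqrt x ≠ 0 := by positivity
  have h2 : (1 : ℝ) + Real.sqrt x ≠ 0 := by positivity
  have h3 : (1 : ℝ) + x ≠ 0 := by positivity
  have hsqrt : HasDerivAt Real.sqrt (1 / (2 * Real.sqrt x)) x :=
    Real.hasDerivAt_sqrt (ne_of_gt hx0)
  have hA : HasDerivAt (fun y => 1 + 2 * Real.sqrt y) (2 * (1 / (2 * Real.sqrt x))) x :=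
    (hsqrt.const_mul 2).const_add 1
  have hlogA : HasDerivAt (fun y => Real.log (1 + 2 * Real.sqrt y))
      ((2 * (1 / (2 * Real.sqrt x))) / (1 + 2 * Real.sqrt x)) x := hA.log h1
  have hB : HasDerivAt (fun y => 1 + Real.sqrt y) (1 / (2 * Real.sqrt x)) x :=
    hsqrt.const_add 1
  have hlogB : HasDerivAt (fun y => Real.log (1 + Real.sqrt y))
      ((1 / (2 * Real.sqrt x)) / (1 + Real.sqrt x)) x := hB.log h2
  have hC : HasDerivAt (fun y : ℝ => (1:ℝ) + y) 1 x := (hasDerivAt_id x).const_add 1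
  have hlogC : HasDerivAt (fun y => Real.log (1 + y)) (1 / (1 + x)) x := by
    have := hC.log h3; simpa using this
  have hsplit : HasDerivAt
      (fun y => -(Real.log 2 + Real.log (1 + 2 * Real.sqrt y)
        - (Real.log 9 + 2 * Real.log (1 + Real.sqrt y) + 2 * Real.log (1 + y))))
      (-((2 * (1 / (2 * Real.sqrt x))) / (1 + 2 * Real.sqrt x)
        - (2 * ((1 / (2 * Real.sqrt x)) / (1 + Real.sqrt x)) + 2 * (1 / (1 + x))))) x := by
    exact (((hlogA.const_add (Real.log 2)).sub
      (((hlogB.const_mul 2).const_add (Real.log 9)).add (hlogC.const_mul 2)))).neg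
  have heq : Fl =ᶠ[nhds x]
      (fun y => -(Real.log 2 + Real.log (1 + 2 * Real.sqrt y)
        - (Real.log 9 + 2 * Real.log (1 + Real.sqrt y) + 2 * Real.log (1 + y)))) := by
    filter_upwards [Ioi_mem_nhds hx] with y hy
    have hy1 : (1:ℝ) < y := hy
    have hy0 : 0 < y := by linarith
    have hys : 0 < Real.sqrt y := Real.sqrt_pos.2 hy0
    have k1 : (1:ℝ) + 2 * Real.sqrt y ≠ 0 := by positivity
    have k2 : (1:ℝ) + Real.sqrt y ≠ 0 := by positivity
    have k3 : (1:ℝ) + y ≠ 0 := by positivity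
    show -Real.log _ = _
    rw [Real.log_div (by positivity) (by positivity), Real.log_mul (by norm_num) k1,
      Real.log_mul (by positivity) (by positivity), Real.log_mul (by norm_num) (by positivity),
      Real.log_pow, Real.log_pow]
    push_cast
    ring
  have := hsplit.congr_of_eventuallyEq heq
  refine this.congr_deriv ?_
  unfold Hl
  field_simp
  ring

lemma hHl4 : HasDerivAt Hl (-83 / 900) 4 := by
  have h4 : Real.sqrt 4 = 2 := sqrt_four
  have hsqrt : HasDerivAt Real.sqrt (1 / 4 : ℝ) 4 := by
    have := Real.hasDerivAt_sqrt (by norm_num : (4:ℝ) ≠ 0)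
    rw [h4] at this
    refine this.congr_deriv ?_; norm_num
  have hu : HasDerivAt (fun y => Real.sqrt y * (1 + 2 * Real.sqrt y))
      ((1/4) * (1 + 2 * Real.sqrt 4) + Real.sqrt 4 * (2 * (1/4))) 4 :=
    hsqrt.mul ((hsqrt.const_mul 2).const_add 1)
  have hune : Real.sqrt 4 * (1 + 2 * Real.sqrt 4) ≠ 0 := by rw [h4]; norm_num
  have huinv := (hu.inv hune).neg
  have hv : HasDerivAt (fun y => Real.sqrt y * (1 + Real.sqrt y))
      ((1/4) * (1 + Real.sqrt 4) + Real.sqrt 4 * (1/4)) 4 :=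
    hsqrt.mul (hsqrt.const_add 1)
  have hvne : Real.sqrt 4 * (1 + Real.sqrt 4) ≠ 0 := by rw [h4]; norm_num
  have hvinv := hv.inv hvne
  have hw : HasDerivAt (fun y : ℝ => (1:ℝ) + y) 1 4 := (hasDerivAt_id 4).const_add 1
  have hwinv := (hw.inv (by norm_num : (1:ℝ) + 4 ≠ 0)).const_mul 2
  have := (huinv.add hvinv).add hwinv
  refine this.congr_deriv ?_
  rw [h4]
  norm_num

lemma hFr (x : ℝ) (hx : 2 < x) : HasDerivAt Fr (Hr x) x := by
  have h1 : 3 * x ^ 2 - 8 ≠ 0 := by nlinarith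
  have h2 : x ^ 2 - 1 ≠ 0 := by nlinarith
  have hA : HasDerivAt (fun y : ℝ => 3 * y ^ 2 - 8) (6 * x) x := by
    have := ((hasDerivAt_pow 2 x).const_mul 3).sub_const 8
    refine this.congr_deriv ?_; ring
  have hlogA : HasDerivAt (fun y => Real.log (3 * y ^ 2 - 8)) ((6 * x) / (3 * x ^ 2 - 8)) x :=
    hA.log h1
  have hB : HasDerivAt (fun y : ℝ => y ^ 2 - 1) (2 * x) x := by
    have := (hasDerivAt_pow 2 x).sub_const 1
    refine this.congr_deriv ?_; ring
  have hlogB : HasDerivAt (fun y => Real.log (y ^ 2 - 1)) ((2 * x) / (x ^ 2 - 1)) x :=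
    hB.log h2
  have hsplit : HasDerivAt
      (fun y => -(Real.log (3 * y ^ 2 - 8) - (Real.log 36 + 2 * Real.log (y ^ 2 - 1))))
      (-((6 * x) / (3 * x ^ 2 - 8) - 2 * ((2 * x) / (x ^ 2 - 1)))) x := by
    exact (hlogA.sub ((hlogB.const_mul 2).const_add (Real.log 36))).neg
  have heq : Fr =ᶠ[nhds x]
      (fun y => -(Real.log (3 * y ^ 2 - 8) - (Real.log 36 + 2 * Real.log (y ^ 2 - 1)))) := by
    filter_upwards [Ioi_mem_nhds hx] with y hy
    have hy2 : (2:ℝ) < y := hy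
    have k1 : 3 * y ^ 2 - 8 ≠ 0 := by nlinarith
    have k2 : y ^ 2 - 1 ≠ 0 := by nlinarith
    show -Real.log _ = _
    rw [Real.log_div k1 (by positivity), Real.log_mul (by norm_num) (by positivity),
      Real.log_pow]
    push_cast
    ring
  have := hsplit.congr_of_eventuallyEq heq
  refine this.congr_deriv ?_
  unfold Hr
  field_simp
  ring

lemma hHr4 : HasDerivAt Hr (-83 / 900) 4 := by
  have hA : HasDerivAt (fun y : ℝ => 3 * y ^ 2 - 8) (6 * 4) 4 := by
    have := ((hasDerivAt_pow 2 (4:ℝ)).const_mul 3).sub_const 8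
    refine this.congr_deriv ?_; norm_num
  have hB : HasDerivAt (fun y : ℝ => y ^ 2 - 1) (2 * 4) 4 := by
    have := (hasDerivAt_pow 2 (4:ℝ)).sub_const 1
    refine this.congr_deriv ?_; norm_num
  have hAinv := hA.inv (by norm_num : 3 * (4:ℝ) ^ 2 - 8 ≠ 0)
  have hBinv := hB.inv (by norm_num : (4:ℝ) ^ 2 - 1 ≠ 0)
  have hid : HasDerivAt (fun y : ℝ => y) 1 4 := hasDerivAt_id 4
  have h1 : HasDerivAt (fun y : ℝ => -(6 * y) * (3 * y ^ 2 - 8)⁻¹)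
      (-6 * (3 * (4:ℝ) ^ 2 - 8)⁻¹ + -(6 * 4) * (-(6 * 4) / (3 * (4:ℝ) ^ 2 - 8) ^ 2)) 4 := by
    have := ((hid.const_mul 6).neg).mul hAinv
    refine this.congr_deriv ?_; norm_num
  have h2 : HasDerivAt (fun y : ℝ => 4 * y * ((y : ℝ) ^ 2 - 1)⁻¹)
      (4 * ((4:ℝ) ^ 2 - 1)⁻¹ + 4 * 4 * (-(2 * 4) / ((4:ℝ) ^ 2 - 1) ^ 2)) 4 := by
    have := (hid.const_mul 4).mul hBinv
    refine this.congr_deriv ?_; norm_num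
  have := h1.add h2
  refine this.congr_deriv ?_
  norm_num

theorem free_energy_C2_at_critical :
    Fl 4 = Fr 4 ∧ deriv Fl 4 = deriv Fr 4 ∧ deriv (deriv Fl) 4 = deriv (deriv Fr) 4 := by
  have h4 : Real.sqrt 4 = 2 := sqrt_four
  refine ⟨?_, ?_, ?_⟩
  · unfold Fl Fr
    rw [h4]
    norm_num
  · rw [(hFl 4 (by norm_num)).deriv, (hFr 4 (by norm_num)).deriv]
    unfold Hl Hr
    rw [h4]
    norm_num
  · have hl : deriv Fl =ᶠ[nhds 4] Hl := by
      filter_upwards [Ioi_mem_nhds (by norm_num : (1:ℝ) < 4)] with y hy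
      exact (hFl y hy).deriv
    have hr : deriv Fr =ᶠ[nhds 4] Hr := by
      filter_upwards [Ioi_mem_nhds (by norm_num : (2:ℝ) < 4)] with y hy
      exact (hFr y hy).deriv
    rw [hl.deriv_eq, hr.deriv_eq, hHl4.deriv, hHr4.deriv]
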